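/- arXiv:1312.1359 — 2 statements merged into one kernel-verified Lean document; each statement's English description precedes it below -/
import Mathlib

section
/- Let ω be a hermitian positive linear functional on a non-unital complex *-algebra A, and let γ > 0 satisfy ‖ω a‖² ≤ γ · (ω (star a * a)).re for all a ∈ A. Fix x ∈ A and η ∈ ℂ, and suppose: γₓ > 0 satisfies ‖ω (star x * a)‖ ≤ γₓ · Real.sqrt ((ω (star a * a)).re) for all a ∈ A; p ≥ 0 satisfies ‖ω (star x * a)‖² ≤ p · (ω (star a * a)).re for all a ∈ A; and ζ > 0 satisfies ‖ω (star x)‖ ≤ ζ · Real.sqrt p. Set K := max (γₓ + ‖η‖ · Real.sqrt γ) (ζ · Real.sqrt p / Real.sqrt γ + ‖η‖ · Real.sqrt γ) and Γ := max (2 * K^2) (‖η‖^2 * γ). Then for every a ∈ A and μ ∈ ℂ, ‖ω^e (star (η, x) * (μ, a))‖² ≤ Γ · (ω^e (star (μ, a) * (μ, a))).re, where ω^e is the extension of ω with parameter γ and elements of the unitization are written as pairs (scalar part, algebra part). -/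
/-!
`Z, W ↦ ω^e (Z* W)` is a positive hermitian sesquilinear form on `Unitization ℂ A`:
expanding `ω^e ((λ, a)* (λ, a))` and bounding the cross term `2 Re (λ̄ ω a)` by
`‖ω a‖² ≤ γ ω(a* a)` gives
`(√ω(a* a) - ‖λ‖√γ)² ≤ ω^e ((λ, a)* (λ, a)) ≤ (√ω(a* a) + ‖λ‖√γ)²`.
Cauchy–Schwarz then bounds `‖ω^e ((η, x)* (μ, a))‖²` by
`ω^e ((η, x)* (η, x)) · ω^e ((μ, a)* (μ, a))`, and testing the bound on `‖ω (x* a)‖` at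
`a = x` gives `√ω(x* x) ≤ γₓ`, so the first factor is at most `(γₓ + ‖η‖√γ)² ≤ K² ≤ Γ`.
-/

/-- The extension `ω^e` with parameter `γ` of a linear functional `ω` on a non-unital
complex *-algebra `A` to the unitization `Unitization ℂ A`:
`ω^e((λ, x)) = ω(x) + λ·γ`. -/
noncomputable def omegaExt {A : Type*} [NonUnitalRing A] [Module ℂ A]
    (ω : A →ₗ[ℂ] ℂ) (γ : ℝ) : Unitization ℂ A → ℂ :=
  fun X => ω X.snd + X.fst * γ

open ComplexConjugate

section PositiveFunctional

variable {B : Type*} [NonUnitalRing B] [StarRing B] [Module ℂ B] [StarModule ℂ B]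
  [IsScalarTower ℂ B B]

abbrev starMulPreInnerProductCore (f : B →ₗ[ℂ] ℂ) (hherm : ∀ z, f (star z) = conj (f z))
    (hpos : ∀ z, 0 ≤ (f (star z * z)).re) : PreInnerProductSpace.Core ℂ B where
  inner z w := f (star z * w)
  conj_inner_symm z w := by
    rw [← hherm, star_mul, star_star]
  re_inner_nonneg := hpos
  add_left z w v := by
    rw [star_add, add_mul, map_add]
  smul_left z w c := by
    rw [star_smul, smul_mul_assoc, map_smul, smul_eq_mul]
    rfl

theorem norm_apply_star_mul_sq_le (f : B →ₗ[ℂ] ℂ) (hherm : ∀ z, f (star z) = conj (f z))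
    (hpos : ∀ z, 0 ≤ (f (star z * z)).re) (z w : B) :
    ‖f (star z * w)‖ ^ 2 ≤ (f (star z * z)).re * (f (star w * w)).re := by
  let := starMulPreInnerProductCore f hherm hpos
  have hswap : ‖f (star w * z)‖ = ‖f (star z * w)‖ := by
    rw [← RCLike.norm_conj, ← hherm, star_mul, star_star]
  calc ‖f (star z * w)‖ ^ 2 = ‖f (star z * w)‖ * ‖f (star w * z)‖ := by rw [hswap, sq]
    _ ≤ _ := InnerProductSpace.Core.inner_mul_inner_self_le (𝕜 := ℂ) z w

end PositiveFunctional

section Extension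

variable {A : Type*} [NonUnitalRing A] [Module ℂ A] (ω : A →ₗ[ℂ] ℂ) (γ : ℝ)

noncomputable def omegaExtLinear : Unitization ℂ A →ₗ[ℂ] ℂ where
  toFun := omegaExt ω γ
  map_add' V W := by
    simp only [omegaExt, Unitization.snd_add, Unitization.fst_add, map_add]
    ring
  map_smul' c V := by
    simp only [omegaExt, Unitization.snd_smul, Unitization.fst_smul, map_smul, smul_eq_mul,
      RingHom.id_apply]
    ring

variable {ω} [StarRing A]

theorem omegaExt_star (hherm : ∀ y : A, ω (star y) = conj (ω y)) (V : Unitization ℂ A) :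
    omegaExt ω γ (star V) = conj (omegaExt ω γ V) := by
  simp [omegaExt, hherm]

theorem omegaExt_star_mul (Z W : Unitization ℂ A) :
    omegaExt ω γ (star Z * W) = conj Z.fst * ω W.snd + W.fst * ω (star Z.snd) +
      ω (star Z.snd * W.snd) + conj Z.fst * W.fst * γ := by
  simp only [omegaExt, Unitization.fst_mul, Unitization.snd_mul, Unitization.fst_star,
    Unitization.snd_star, map_add, map_smul, smul_eq_mul, Complex.star_def]

theorem re_omegaExt_star_mul_self (hherm : ∀ y : A, ω (star y) = conj (ω y))
    (Z : Unitization ℂ A) :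
    (omegaExt ω γ (star Z * Z)).re =
      (ω (star Z.snd * Z.snd)).re + 2 * (conj Z.fst * ω Z.snd).re + ‖Z.fst‖ ^ 2 * γ := by
  have hcross : Z.fst * ω (star Z.snd) = conj (conj Z.fst * ω Z.snd) := by
    rw [hherm, map_mul, Complex.conj_conj]
  have hscalar : conj Z.fst * Z.fst * (γ : ℂ) = ((‖Z.fst‖ ^ 2 * γ : ℝ) : ℂ) := by
    rw [Complex.conj_mul']
    push_cast
    ring
  rw [omegaExt_star_mul, hcross, hscalar]
  simp only [Complex.add_re, Complex.ofReal_re, Complex.conj_re]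
  ring

theorem abs_re_conj_mul_le (hγ : 0 ≤ γ)
    (hHB : ∀ a : A, ‖ω a‖ ^ 2 ≤ γ * (ω (star a * a)).re) (l : ℂ) (a : A) :
    |(conj l * ω a).re| ≤ ‖l‖ * Real.sqrt γ * Real.sqrt (ω (star a * a)).re := by
  have hωa : ‖ω a‖ ≤ Real.sqrt γ * Real.sqrt (ω (star a * a)).re := by
    rw [← Real.sqrt_mul hγ]
    exact Real.le_sqrt_of_sq_le (hHB a)
  calc |(conj l * ω a).re| ≤ ‖conj l * ω a‖ := Complex.abs_re_le_norm _
    _ = ‖l‖ * ‖ω a‖ := by rw [norm_mul, RCLike.norm_conj]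
    _ ≤ _ := by rw [mul_assoc]; gcongr

theorem re_omegaExt_star_mul_self_nonneg (hherm : ∀ y : A, ω (star y) = conj (ω y))
    (hγ : 0 ≤ γ) (hpos : ∀ a : A, 0 ≤ (ω (star a * a)).re)
    (hHB : ∀ a : A, ‖ω a‖ ^ 2 ≤ γ * (ω (star a * a)).re) (Z : Unitization ℂ A) :
    0 ≤ (omegaExt ω γ (star Z * Z)).re := by
  have hcross := (abs_le.mp (abs_re_conj_mul_le γ hγ hHB Z.fst Z.snd)).1
  rw [re_omegaExt_star_mul_self γ hherm]
  nlinarith [Real.sq_sqrt (hpos Z.snd), Real.sq_sqrt hγ,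
    sq_nonneg (Real.sqrt (ω (star Z.snd * Z.snd)).re - ‖Z.fst‖ * Real.sqrt γ)]

theorem re_omegaExt_star_mul_self_le (hherm : ∀ y : A, ω (star y) = conj (ω y))
    (hγ : 0 ≤ γ) (hpos : ∀ a : A, 0 ≤ (ω (star a * a)).re)
    (hHB : ∀ a : A, ‖ω a‖ ^ 2 ≤ γ * (ω (star a * a)).re) (Z : Unitization ℂ A) :
    (omegaExt ω γ (star Z * Z)).re ≤
      (Real.sqrt (ω (star Z.snd * Z.snd)).re + ‖Z.fst‖ * Real.sqrt γ) ^ 2 := by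
  have hcross := (abs_le.mp (abs_re_conj_mul_le γ hγ hHB Z.fst Z.snd)).2
  rw [re_omegaExt_star_mul_self γ hherm]
  nlinarith [Real.sq_sqrt (hpos Z.snd), Real.sq_sqrt hγ]

end Extension

theorem sqrt_re_le_of_norm_le_mul_sqrt {z : ℂ} {c : ℝ} (hc : 0 ≤ c)
    (h : ‖z‖ ≤ c * Real.sqrt z.re) : Real.sqrt z.re ≤ c := by
  rcases (Real.sqrt_nonneg z.re).eq_or_lt with hzero | hpos
  · exact hzero ▸ hc
  · refine le_of_mul_le_mul_right ?_ hpos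
    calc Real.sqrt z.re * Real.sqrt z.re ≤ ‖z‖ := by
          rw [Real.mul_self_sqrt (Real.sqrt_pos.mp hpos).le]; exact Complex.re_le_norm z
      _ ≤ c * Real.sqrt z.re := h

theorem extension_key_estimate_general {A : Type*} [NonUnitalRing A] [StarRing A] [Module ℂ A]
    [StarModule ℂ A] [SMulCommClass ℂ A A] [IsScalarTower ℂ A A]
    (ω : A →ₗ[ℂ] ℂ)
    (hpos : ∀ a : A, (ω (star a * a)).im = 0 ∧ 0 ≤ (ω (star a * a)).re)
    (hherm : ∀ y : A, ω (star y) = starRingEnd ℂ (ω y))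
    (γ : ℝ) (hγ : 0 < γ)
    (hHB : ∀ a : A, ‖ω a‖ ^ 2 ≤ γ * (ω (star a * a)).re)
    (x : A) (η : ℂ)
    (γx : ℝ) (hγx : 0 < γx)
    (hL3x : ∀ a : A, ‖ω (star x * a)‖ ≤ γx * Real.sqrt (ω (star a * a)).re)
    (p : ℝ)
    (ζ : ℝ)
    (K Γ : ℝ)
    (hK : K = max (γx + ‖η‖ * Real.sqrt γ)
      (ζ * Real.sqrt p / Real.sqrt γ + ‖η‖ * Real.sqrt γ))
    (hΓ : Γ = max (2 * K ^ 2) (‖η‖ ^ 2 * γ)) :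
    ∀ (a : A) (μ : ℂ),
      ‖omegaExt ω γ (star (Unitization.inl η + (x : Unitization ℂ A)) *
          (Unitization.inl μ + (a : Unitization ℂ A)))‖ ^ 2 ≤
        Γ * (omegaExt ω γ (star (Unitization.inl μ + (a : Unitization ℂ A)) *
          (Unitization.inl μ + (a : Unitization ℂ A)))).re := by
  intro a μ
  set X : Unitization ℂ A := Unitization.inl η + (x : Unitization ℂ A)
  set Y : Unitization ℂ A := Unitization.inl μ + (a : Unitization ℂ A)
  have hpos_re : ∀ a : A, 0 ≤ (ω (star a * a)).re := fun a => (hpos a).2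
  have hnonneg := re_omegaExt_star_mul_self_nonneg γ hherm hγ.le hpos_re hHB
  have hXX : (omegaExt ω γ (star X * X)).re ≤ Γ :=
    calc _ ≤ (Real.sqrt (ω (star x * x)).re + ‖η‖ * Real.sqrt γ) ^ 2 := by
          simpa [X] using re_omegaExt_star_mul_self_le γ hherm hγ.le hpos_re hHB X
      _ ≤ (γx + ‖η‖ * Real.sqrt γ) ^ 2 := by
          gcongr
          exact sqrt_re_le_of_norm_le_mul_sqrt hγx.le (hL3x x)
      _ ≤ K ^ 2 := by
          gcongr
          exact hK ▸ le_max_left _ _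
      _ ≤ 2 * K ^ 2 := le_mul_of_one_le_left (sq_nonneg K) one_le_two
      _ ≤ Γ := hΓ ▸ le_max_left _ _
  calc _ ≤ (omegaExt ω γ (star X * X)).re * (omegaExt ω γ (star Y * Y)).re :=
        norm_apply_star_mul_sq_le (omegaExtLinear ω γ) (omegaExt_star γ hherm) hnonneg X Y
    _ ≤ Γ * _ := mul_le_mul_of_nonneg_right hXX (hnonneg Y)

/-- **The key estimate in the proof of Proposition 3.3.** For a hermitian positive
linear functional `ω` satisfying (HB) with bound `γ`, given `x ∈ A`, `η ∈ ℂ`, an (L.3)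
constant `γₓ` for `x`, a bound `p` on the sesquilinear values against `x` and an (EHB)
constant `ζ`, the squared modulus of `ω^e((η,x)* · (μ,a))` is bounded by
`Γ · ω^e((μ,a)* · (μ,a))` where `Γ = max (2K²) (‖η‖²γ)`. -/
theorem extension_key_estimate {A : Type*} [NonUnitalRing A] [StarRing A] [Module ℂ A]
    [StarModule ℂ A] [SMulCommClass ℂ A A] [IsScalarTower ℂ A A]
    (ω : A →ₗ[ℂ] ℂ)
    (hpos : ∀ a : A, (ω (star a * a)).im = 0 ∧ 0 ≤ (ω (star a * a)).re)
    (hherm : ∀ y : A, ω (star y) = starRingEnd ℂ (ω y))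
    (γ : ℝ) (hγ : 0 < γ)
    (hHB : ∀ a : A, ‖ω a‖ ^ 2 ≤ γ * (ω (star a * a)).re)
    (x : A) (η : ℂ)
    (γx : ℝ) (hγx : 0 < γx)
    (hL3x : ∀ a : A, ‖ω (star x * a)‖ ≤ γx * Real.sqrt (ω (star a * a)).re)
    (p : ℝ) (hp : 0 ≤ p)
    (hpx : ∀ a : A, ‖ω (star x * a)‖ ^ 2 ≤ p * (ω (star a * a)).re)
    (ζ : ℝ) (hζ : 0 < ζ)
    (hEHBx : ‖ω (star x)‖ ≤ ζ * Real.sqrt p)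
    (K Γ : ℝ)
    (hK : K = max (γx + ‖η‖ * Real.sqrt γ)
      (ζ * Real.sqrt p / Real.sqrt γ + ‖η‖ * Real.sqrt γ))
    (hΓ : Γ = max (2 * K ^ 2) (‖η‖ ^ 2 * γ)) :
    ∀ (a : A) (μ : ℂ),
      ‖omegaExt ω γ (star (Unitization.inl η + (x : Unitization ℂ A)) *
          (Unitization.inl μ + (a : Unitization ℂ A)))‖ ^ 2 ≤
        Γ * (omegaExt ω γ (star (Unitization.inl μ + (a : Unitization ℂ A)) *
          (Unitization.inl μ + (a : Unitization ℂ A)))).re :=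
  extension_key_estimate_general ω hpos hherm γ hγ hHB x η γx hγx hL3x p ζ K Γ hK hΓ
end

section
/- Let ω be a hermitian positive linear functional on a non-unital complex *-algebra A. If ω satisfies (EHB), i.e. there exists ζ > 0 such that for every x ∈ A and every real p ≥ 0 satisfying ‖ω (star x * a)‖² ≤ p · (ω (star a * a)).re for all a ∈ A, one has ‖ω (star x)‖ ≤ ζ · Real.sqrt p, then ω satisfies (HB): there exists δ > 0 such that ‖ω a‖² ≤ δ · (ω (star a * a)).re for every a ∈ A (indeed δ = ζ² works). -/
/-!
A hermitian positive functional `ω` makes `⟪x, y⟫ = ω (x⋆ y)` a semi-inner product on `A`, so by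
Cauchy–Schwarz every `x = a` satisfies the premise of (EHB) with `p = ω (a⋆ a)`. Since `ω` is
hermitian, `‖ω a‖ = ‖ω a⋆‖ ≤ ζ √(ω (a⋆ a))`.
-/

section

variable {A : Type*} [NonUnitalRing A] [StarRing A] [Module ℂ A] [StarModule ℂ A]
  [IsScalarTower ℂ A A]

abbrev LinearMap.toPreInnerProductSpaceCore (ω : A →ₗ[ℂ] ℂ)
    (hpos : ∀ a : A, 0 ≤ (ω (star a * a)).re)
    (hherm : ∀ x : A, ω (star x) = starRingEnd ℂ (ω x)) :
    PreInnerProductSpace.Core ℂ A where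
  inner x y := ω (star x * y)
  conj_inner_symm x y := by rw [← hherm, star_mul, star_star]
  re_inner_nonneg := hpos
  add_left x y z := by rw [star_add, add_mul, map_add]
  smul_left x y r := by rw [star_smul, smul_mul_assoc, map_smul, smul_eq_mul]; rfl

theorem LinearMap.norm_apply_star_mul_sq_le (ω : A →ₗ[ℂ] ℂ)
    (hpos : ∀ a : A, 0 ≤ (ω (star a * a)).re)
    (hherm : ∀ x : A, ω (star x) = starRingEnd ℂ (ω x)) (a b : A) :
    ‖ω (star a * b)‖ ^ 2 ≤ (ω (star a * a)).re * (ω (star b * b)).re := by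
  let _ := ω.toPreInnerProductSpaceCore hpos hherm
  have h := InnerProductSpace.Core.inner_mul_inner_self_le (𝕜 := ℂ) a b
  rwa [InnerProductSpace.Core.norm_inner_symm b a, ← sq] at h

end

theorem ehb_implies_hb_general {A : Type*} [NonUnitalRing A] [StarRing A] [Module ℂ A]
    [StarModule ℂ A] [IsScalarTower ℂ A A]
    (ω : A →ₗ[ℂ] ℂ)
    (hpos : ∀ a : A, (ω (star a * a)).im = 0 ∧ 0 ≤ (ω (star a * a)).re)
    (hherm : ∀ x : A, ω (star x) = starRingEnd ℂ (ω x))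
    (ζ : ℝ) (hζ : 0 < ζ)
    (hEHB : ∀ (x : A) (p : ℝ), 0 ≤ p →
      (∀ a : A, ‖ω (star x * a)‖ ^ 2 ≤ p * (ω (star a * a)).re) →
      ‖ω (star x)‖ ≤ ζ * Real.sqrt p) :
    ∃ δ > 0, δ = ζ ^ 2 ∧ ∀ a : A, ‖ω a‖ ^ 2 ≤ δ * (ω (star a * a)).re := by
  refine ⟨ζ ^ 2, by positivity, rfl, fun a ↦ ?_⟩
  have hre (b : A) : 0 ≤ (ω (star b * b)).re := (hpos b).2
  have h := hEHB a _ (hre a) (ω.norm_apply_star_mul_sq_le hre hherm a)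
  calc ‖ω a‖ ^ 2 = ‖ω (star a)‖ ^ 2 := by rw [hherm, Complex.norm_conj]
    _ ≤ (ζ * √(ω (star a * a)).re) ^ 2 := by gcongr
    _ = ζ ^ 2 * (ω (star a * a)).re := by rw [mul_pow, Real.sq_sqrt (hre a)]

/-- **(EHB) implies (HB).** If a hermitian positive linear functional `ω` on a
non-unital complex *-algebra satisfies (EHB), then it satisfies (HB) with `δ = ζ²`. -/
theorem ehb_implies_hb {A : Type*} [NonUnitalRing A] [StarRing A] [Module ℂ A]
    [StarModule ℂ A] [SMulCommClass ℂ A A] [IsScalarTower ℂ A A]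
    (ω : A →ₗ[ℂ] ℂ)
    (hpos : ∀ a : A, (ω (star a * a)).im = 0 ∧ 0 ≤ (ω (star a * a)).re)
    (hherm : ∀ x : A, ω (star x) = starRingEnd ℂ (ω x))
    (ζ : ℝ) (hζ : 0 < ζ)
    (hEHB : ∀ (x : A) (p : ℝ), 0 ≤ p →
      (∀ a : A, ‖ω (star x * a)‖ ^ 2 ≤ p * (ω (star a * a)).re) →
      ‖ω (star x)‖ ≤ ζ * Real.sqrt p) :
    ∃ δ > 0, δ = ζ ^ 2 ∧ ∀ a : A, ‖ω a‖ ^ 2 ≤ δ * (ω (star a * a)).re :=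
  ehb_implies_hb_general ω hpos hherm ζ hζ hEHB
end
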